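/- Let Π be a conditional probability kernel from {0,1}^{2n} to a finite transcript alphabet such that for all inputs t, t' ∈ {0,1}^{2n} differing in exactly one coordinate and every transcript π, Pr[Π(t) = π] ≤ e^ε·Pr[Π(t') = π]. If T is uniformly distributed on {0,1}^{2n}, then the mutual information satisfies I(T; Π(T)) ≤ n·ε² nats (equivalently, at most ε²n/ln 2 ≤ 1.5·ε²n bits). -/
import Mathlib


open Real
open scoped BigOperators

/-- Two input strings are neighbors if they differ in exactly one coordinate. -/
def NeighborStr {m : ℕ} {A : Type*} (t t' : Fin m → A) : Prop :=
  ∃ i, t i ≠ t' i ∧ ∀ j, j ≠ i → t j = t' j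

/-- The mutual information `I(T; Π(T))` (in nats) between the input `T ∼ P` and the
transcript of the protocol, i.e. the information cost of the protocol. -/
noncomputable def infoCost {A 𝒯 : Type*} [Fintype A] [Fintype 𝒯]
    (P : A → ℝ) (K : A → 𝒯 → ℝ) : ℝ :=
  ∑ t, ∑ tr, P t * K t tr * log (K t tr / ∑ t', P t' * K t' tr)

lemma NeighborStr.symm' {m : ℕ} {A : Type*} {t t' : Fin m → A}
    (h : NeighborStr t t') : NeighborStr t' t := by
  obtain ⟨i, h1, h2⟩ := h
  exact ⟨i, h1.symm, fun j hj => (h2 j hj).symm⟩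

lemma neighbor_cons {m : ℕ} (b : Bool) {s s' : Fin m → Bool} (h : NeighborStr s s') :
    NeighborStr (Fin.cons b s) (Fin.cons b s') := by
  obtain ⟨i, hi, hj⟩ := h
  refine ⟨i.succ, by simpa using hi, fun j hj' => ?_⟩
  cases j using Fin.cases with
  | zero => simp
  | succ k =>
    simp only [Fin.cons_succ]
    exact hj k (fun hk => hj' (by rw [hk]))

lemma neighbor_zero {m : ℕ} (s : Fin m → Bool) :
    NeighborStr (Fin.cons false s) (Fin.cons true s) := by
  refine ⟨0, by simp, fun j hj => ?_⟩
  cases j using Fin.cases with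
  | zero => exact absurd rfl hj
  | succ k => simp

section
variable {𝒯 : Type*} [Fintype 𝒯]

lemma tau_sq_le' (ε : ℝ) (hε : 0 ≤ ε) :
    ((exp ε - 1)/(exp ε + 1))^2 ≤ ε^2/2 := by
  have hE1 : 1 ≤ exp ε := Real.one_le_exp hε
  have hEpos : (0:ℝ) < exp ε + 1 := by linarith
  rw [div_pow, div_le_iff₀ (by positivity)]
  rcases le_or_gt ε 2 with h2 | h2
  · have h1 : (1 - ε/2) ≤ exp (-(ε/2)) := by
      have := Real.add_one_le_exp (-(ε/2)); linarith
    have h0 : (0:ℝ) ≤ 1 - ε/2 := by linarith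
    have hF : (1-ε/2)^2 ≤ exp (-ε) := by
      have h := mul_le_mul h1 h1 h0 (le_of_lt (Real.exp_pos _))
      calc (1-ε/2)^2 = (1-ε/2)*(1-ε/2) := sq (1-ε/2) ▸ (sq (1-ε/2)).symm ▸ by ring
        _ ≤ exp (-(ε/2)) * exp (-(ε/2)) := h
        _ = exp (-ε) := by rw [← Real.exp_add]; ring_nf
    have hEF : exp ε * exp (-ε) = 1 := by rw [← Real.exp_add]; simp
    have hFle1 : exp (-ε) ≤ 1 := Real.exp_le_one_iff.mpr (by linarith)
    have hFpos : 0 < exp (-ε) := Real.exp_pos _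
    -- key in F : 2(1-F)^2 ≤ ε²(1+F)²
    have key : 2 * (1 - exp (-ε))^2 ≤ ε^2 * (1 + exp (-ε))^2 := by
      nlinarith [hF, hFle1, hFpos, sq_nonneg (ε^2 - 4*ε + 5), sq_nonneg (ε - 1), sq_nonneg (1 - exp (-ε)), sq_nonneg (ε*(1 - ε/4) - (1 - exp (-ε))), mul_nonneg hε hFpos.le]
    -- convert via E relations
    have hE : exp ε - 1 = exp ε * (1 - exp (-ε)) := by
      rw [mul_sub, hEF]; ring
    have hE' : exp ε + 1 = exp ε * (1 + exp (-ε)) := by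
      rw [mul_add, hEF]; ring
    rw [hE, hE', mul_pow, mul_pow]
    nlinarith [key, sq_nonneg (exp ε), Real.exp_pos ε]
  · have hlt : exp ε - 1 < exp ε + 1 := by linarith
    have h1 : (exp ε - 1)^2 ≤ (exp ε + 1)^2 := by nlinarith
    have h2' : (1:ℝ) ≤ ε^2/2 := by nlinarith
    calc (exp ε - 1)^2 ≤ 1 * (exp ε + 1)^2 := by linarith
      _ ≤ ε^2/2 * (exp ε + 1)^2 := by
          apply mul_le_mul_of_nonneg_right h2' (by positivity)


lemma js_le {𝒯 : Type*} [Fintype 𝒯] (ε : ℝ) (hε : 0 ≤ ε)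
    (p q : 𝒯 → ℝ) (hp : ∀ x, 0 ≤ p x) (hq : ∀ x, 0 ≤ q x)
    (hps : ∑ x, p x = 1) (hqs : ∑ x, q x = 1)
    (hpq : ∀ x, p x ≤ exp ε * q x) (hqp : ∀ x, q x ≤ exp ε * p x) :
    ∑ x, ((1/2) * p x * log (p x / ((1/2)*(p x + q x)))
        + (1/2) * q x * log (q x / ((1/2)*(p x + q x)))) ≤ ε^2/2 := by
  have hE1 : 1 ≤ exp ε := Real.one_le_exp hε
  have tau_sq_le : ((exp ε - 1)/(exp ε + 1))^2 ≤ ε^2/2 := tau_sq_le' ε hε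
  set τ : ℝ := (exp ε - 1)/(exp ε + 1) with hτ
  have hτ0 : 0 ≤ τ := div_nonneg (by linarith) (by positivity)
  have key : ∀ x, (1/2) * p x * log (p x / ((1/2)*(p x + q x)))
        + (1/2) * q x * log (q x / ((1/2)*(p x + q x)))
        ≤ τ^2 * ((1/2) * (p x + q x)) := by
    intro x
    rcases eq_or_lt_of_le (hp x) with h0 | hppos
    · have hq0 : q x = 0 := le_antisymm (by simpa [← h0] using hqp x) (hq x)
      simp [← h0, hq0]
    · have hqpos : 0 < q x := by
        by_contra h
        push_neg at h
        have hq0 : q x = 0 := le_antisymm h (hq x)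
        have h2 := hpq x
        rw [hq0, mul_zero] at h2
        linarith
      have hs : 0 < p x + q x := by linarith
      -- log x ≤ x - 1 termwise
      have l1 : log (p x / ((1/2)*(p x + q x))) ≤ p x / ((1/2)*(p x + q x)) - 1 :=
        Real.log_le_sub_one_of_pos (by positivity)
      have l2 : log (q x / ((1/2)*(p x + q x))) ≤ q x / ((1/2)*(p x + q x)) - 1 :=
        Real.log_le_sub_one_of_pos (by positivity)
      have b1 : (1/2) * p x * log (p x / ((1/2)*(p x + q x)))
          ≤ (1/2) * p x * (p x / ((1/2)*(p x + q x)) - 1) := by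
        apply mul_le_mul_of_nonneg_left l1 (by positivity)
      have b2 : (1/2) * q x * log (q x / ((1/2)*(p x + q x)))
          ≤ (1/2) * q x * (q x / ((1/2)*(p x + q x)) - 1) := by
        apply mul_le_mul_of_nonneg_left l2 (by positivity)
      have id1 : (1/2) * p x * (p x / ((1/2)*(p x + q x)) - 1)
          + (1/2) * q x * (q x / ((1/2)*(p x + q x)) - 1)
          = (1/2) * (p x - q x)^2 / (p x + q x) := by
        field_simp
        ring
      -- (p-q)^2 ≤ τ^2 (p+q)^2
      have habs : (p x - q x)^2 * (exp ε + 1)^2 ≤ (exp ε - 1)^2 * (p x + q x)^2 := by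
        nlinarith [hpq x, hqp x, hppos, hqpos, hE1, mul_nonneg (sub_nonneg.mpr (hpq x)) (sub_nonneg.mpr (hqp x))]
      have hEp : (0:ℝ) < (exp ε + 1)^2 := by positivity
      have h2 : (p x - q x)^2 ≤ τ^2 * (p x + q x)^2 := by
        rw [hτ, div_pow, div_mul_eq_mul_div, le_div_iff₀ hEp]
        nlinarith [habs]
      calc (1/2) * p x * log (p x / ((1/2)*(p x + q x)))
            + (1/2) * q x * log (q x / ((1/2)*(p x + q x)))
          ≤ (1/2) * (p x - q x)^2 / (p x + q x) := by rw [← id1]; exact add_le_add b1 b2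
        _ ≤ τ^2 * ((1/2) * (p x + q x)) := by
            rw [div_le_iff₀ hs]
            nlinarith [h2]
  calc ∑ x, ((1/2) * p x * log (p x / ((1/2)*(p x + q x)))
        + (1/2) * q x * log (q x / ((1/2)*(p x + q x))))
      ≤ ∑ x, τ^2 * ((1/2) * (p x + q x)) := Finset.sum_le_sum (fun x _ => key x)
    _ = τ^2 := by
        rw [← Finset.mul_sum]
        have : ∑ x, (1/2) * (p x + q x) = 1 := by
          rw [← Finset.mul_sum, Finset.sum_add_distrib, hps, hqs]; norm_num
        rw [this, mul_one]
    _ ≤ ε^2/2 := tau_sq_le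


lemma aux_bound (ε : ℝ) (hε : 0 ≤ ε) :
    ∀ (m : ℕ) (K : (Fin m → Bool) → 𝒯 → ℝ),
    (∀ t tr, 0 ≤ K t tr) → (∀ t, ∑ tr, K t tr = 1) →
    (∀ t t', NeighborStr t t' → ∀ tr, K t tr ≤ exp ε * K t' tr) →
    infoCost (fun _ => (1:ℝ)/2^m) K ≤ m * (ε^2/2) := by
  intro m
  induction m with
  | zero =>
    intro K hK0 hK1 hDP
    have hz : ∀ (t : Fin 0 → Bool) (tr : 𝒯),
        ((1:ℝ)/2^0) * K t tr * log (K t tr / ∑ t', ((1:ℝ)/2^0) * K t' tr) = 0 := by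
      intro t tr
      have hsum : (∑ t' : Fin 0 → Bool, ((1:ℝ)/2^0) * K t' tr) = ((1:ℝ)/2^0) * K t tr :=
        Fintype.sum_subsingleton _ t
      rcases eq_or_lt_of_le (hK0 t tr) with h0 | hpos
      · rw [← h0]; simp
      · rw [hsum]
        have h1 : K t tr / ((1:ℝ)/2^0 * K t tr) = 1 := by
          rw [pow_zero]
          field_simp
        rw [h1, Real.log_one, mul_zero]
    rw [infoCost]
    simp only [hz, Finset.sum_const_zero]
    simp
  | succ m ih =>
    intro K hK0 hK1 hDP
    set c : ℝ := (1:ℝ)/2^(m+1) with hc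
    set d : ℝ := (1:ℝ)/2^m with hd
    have hcd : c = (1/2) * d := by rw [hc, hd, pow_succ]; ring
    have hdpos : 0 < d := by rw [hd]; positivity
    set Mb : Bool → 𝒯 → ℝ := fun b tr => ∑ s, d * K (Fin.cons b s) tr with hMb
    have hMbnn : ∀ b tr, 0 ≤ Mb b tr := fun b tr =>
      Finset.sum_nonneg fun s _ => mul_nonneg hdpos.le (hK0 _ _)
    have hMbsum : ∀ b, ∑ tr, Mb b tr = 1 := by
      intro b
      rw [hMb]
      rw [Finset.sum_comm]
      have h1 : ∀ s : Fin m → Bool, ∑ tr, d * K (Fin.cons b s) tr = d := by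
        intro s; rw [← Finset.mul_sum, hK1, mul_one]
      rw [Finset.sum_congr rfl fun s _ => h1 s]
      rw [Finset.sum_const, Finset.card_univ]
      have : Fintype.card (Fin m → Bool) = 2^m := by
        rw [Fintype.card_fun]; simp
      rw [this, nsmul_eq_mul, hd]
      push_cast
      field_simp
    have hMbDP1 : ∀ tr, Mb false tr ≤ exp ε * Mb true tr := by
      intro tr
      rw [hMb]
      simp only []
      rw [Finset.mul_sum]
      refine Finset.sum_le_sum fun s _ => ?_
      have := hDP _ _ (neighbor_zero s) tr
      calc d * K (Fin.cons false s) tr ≤ d * (exp ε * K (Fin.cons true s) tr) :=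
            mul_le_mul_of_nonneg_left this hdpos.le
        _ = exp ε * (d * K (Fin.cons true s) tr) := by ring
    have hMbDP2 : ∀ tr, Mb true tr ≤ exp ε * Mb false tr := by
      intro tr
      rw [hMb]
      simp only []
      rw [Finset.mul_sum]
      refine Finset.sum_le_sum fun s _ => ?_
      have := hDP _ _ (neighbor_zero s).symm' tr
      calc d * K (Fin.cons true s) tr ≤ d * (exp ε * K (Fin.cons false s) tr) :=
            mul_le_mul_of_nonneg_left this hdpos.le
        _ = exp ε * (d * K (Fin.cons false s) tr) := by ring
    -- sum restructuring over Fin (m+1) → Bool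
    have hsum_restr : ∀ (f : (Fin (m+1) → Bool) → ℝ),
        ∑ t, f t = ∑ b : Bool, ∑ s : Fin m → Bool, f (Fin.cons b s) := by
      intro f
      rw [← Equiv.sum_comp (Fin.consEquiv (fun _ => Bool)) f, Fintype.sum_prod_type]
      rfl
    have hD : ∀ tr, (∑ t', c * K t' tr) = (1/2) * (Mb false tr + Mb true tr) := by
      intro tr
      rw [hsum_restr (fun t => c * K t tr), Fintype.sum_bool]
      rw [hMb]
      simp only []
      rw [mul_add, Finset.mul_sum, Finset.mul_sum, add_comm]
      congr 1
      · exact Finset.sum_congr rfl fun s _ => by rw [hcd]; ring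
      · exact Finset.sum_congr rfl fun s _ => by rw [hcd]; ring
    have hhalf : ∀ b tr, ∑ s, c * K (Fin.cons b s) tr = (1/2) * Mb b tr := by
      intro b tr
      rw [hMb]
      simp only []
      rw [Finset.mul_sum]
      exact Finset.sum_congr rfl fun s _ => by rw [hcd]; ring
    -- termwise chain-rule identity
    have hterm : ∀ (b : Bool) (s : Fin m → Bool) (tr : 𝒯),
        c * K (Fin.cons b s) tr * log (K (Fin.cons b s) tr / ∑ t', c * K t' tr)
        = (1/2) * (d * K (Fin.cons b s) tr * log (K (Fin.cons b s) tr / Mb b tr))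
          + c * K (Fin.cons b s) tr * log (Mb b tr / ((1/2) * (Mb false tr + Mb true tr))) := by
      intro b s tr
      rw [hD tr]
      rcases eq_or_lt_of_le (hK0 (Fin.cons b s) tr) with h0 | hpos
      · rw [← h0]; simp
      · have hMbpos : 0 < Mb b tr := by
          have h1 : d * K (Fin.cons b s) tr ≤ Mb b tr :=
            Finset.single_le_sum (f := fun s' => d * K (Fin.cons b s') tr)
              (fun i _ => mul_nonneg hdpos.le (hK0 _ _)) (Finset.mem_univ s)
          nlinarith
        have hmid : 0 < (1/2) * (Mb false tr + Mb true tr) := by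
          have h1 := hMbnn false tr
          have h2 := hMbnn true tr
          cases b
          · nlinarith
          · nlinarith
        have hlog : log (K (Fin.cons b s) tr / ((1/2) * (Mb false tr + Mb true tr)))
            = log (K (Fin.cons b s) tr / Mb b tr)
              + log (Mb b tr / ((1/2) * (Mb false tr + Mb true tr))) := by
          rw [← Real.log_mul (by positivity) (by positivity)]
          congr 1
          rw [div_mul_div_comm, mul_comm (K (Fin.cons b s) tr) (Mb b tr),
            mul_div_mul_left _ _ hMbpos.ne']
        rw [hlog, hcd]
        ring
    -- per-branch decomposition
    have hA : ∀ b : Bool,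
        (∑ s, ∑ tr, c * K (Fin.cons b s) tr * log (K (Fin.cons b s) tr / ∑ t', c * K t' tr))
        = (1/2) * (∑ s, ∑ tr, d * K (Fin.cons b s) tr * log (K (Fin.cons b s) tr / Mb b tr))
          + ∑ tr, (1/2) * Mb b tr * log (Mb b tr / ((1/2) * (Mb false tr + Mb true tr))) := by
      intro b
      have step1 : (∑ s, ∑ tr, c * K (Fin.cons b s) tr * log (K (Fin.cons b s) tr / ∑ t', c * K t' tr))
          = ∑ s, ∑ tr, ((1/2) * (d * K (Fin.cons b s) tr * log (K (Fin.cons b s) tr / Mb b tr))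
            + c * K (Fin.cons b s) tr * log (Mb b tr / ((1/2) * (Mb false tr + Mb true tr)))) :=
        Finset.sum_congr rfl fun s _ => Finset.sum_congr rfl fun tr _ => hterm b s tr
      rw [step1]
      rw [Finset.sum_congr rfl fun s (_ : s ∈ Finset.univ) => Finset.sum_add_distrib]
      rw [Finset.sum_add_distrib]
      congr 1
      · rw [Finset.mul_sum]
        exact Finset.sum_congr rfl fun s _ => by rw [Finset.mul_sum]
      · rw [Finset.sum_comm]
        refine Finset.sum_congr rfl fun tr _ => ?_
        rw [← Finset.sum_mul, hhalf b tr]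
    -- assemble
    have expand : infoCost (fun _ : Fin (m+1) → Bool => c) K
        = ∑ b : Bool, ∑ s, ∑ tr, c * K (Fin.cons b s) tr *
            log (K (Fin.cons b s) tr / ∑ t', c * K t' tr) :=
      hsum_restr (fun t => ∑ tr, c * K t tr * log (K t tr / ∑ t', c * K t' tr))
    rw [show (fun _ : Fin (m+1) → Bool => (1:ℝ)/2^(m+1)) = (fun _ : Fin (m+1) → Bool => c) from rfl]
    rw [expand, Fintype.sum_bool, hA true, hA false]
    have hI : ∀ b : Bool,
        (∑ s, ∑ tr, d * K (Fin.cons b s) tr * log (K (Fin.cons b s) tr / Mb b tr))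
          ≤ m * (ε^2/2) := by
      intro b
      have h := ih (fun s tr => K (Fin.cons b s) tr)
        (fun s tr => hK0 _ _) (fun s => hK1 _)
        (fun s s' hn tr => hDP _ _ (neighbor_cons b hn) tr)
      exact h
    have hJ : (∑ tr, (1/2) * Mb true tr * log (Mb true tr / ((1/2) * (Mb false tr + Mb true tr))))
          + (∑ tr, (1/2) * Mb false tr * log (Mb false tr / ((1/2) * (Mb false tr + Mb true tr))))
          ≤ ε^2/2 := by
      rw [← Finset.sum_add_distrib]
      have hjs := js_le ε hε (Mb false) (Mb true) (hMbnn false) (hMbnn true)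
        (hMbsum false) (hMbsum true) hMbDP1 hMbDP2
      calc ∑ tr, ((1/2) * Mb true tr * log (Mb true tr / ((1/2) * (Mb false tr + Mb true tr)))
              + (1/2) * Mb false tr * log (Mb false tr / ((1/2) * (Mb false tr + Mb true tr))))
          = ∑ tr, ((1/2) * Mb false tr * log (Mb false tr / ((1/2) * (Mb false tr + Mb true tr)))
              + (1/2) * Mb true tr * log (Mb true tr / ((1/2) * (Mb false tr + Mb true tr)))) :=
            Finset.sum_congr rfl fun tr _ => add_comm _ _
        _ ≤ ε^2/2 := hjs
    push_cast
    linarith [hI true, hI false, hJ]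
end

/-- For an `ε`-differentially private two-party protocol on binary inputs in
`{0,1}^{2n}` and a uniformly distributed input `T`, the information cost satisfies
`I(T; Π(T)) ≤ n·ε²` nats (i.e. at most `1.5·ε²n` bits). -/
theorem info_cost_le_of_dp_uniform {𝒯 : Type*} [Fintype 𝒯]
    (n : ℕ) (K : (Fin (2 * n) → Bool) → 𝒯 → ℝ) (ε : ℝ) (hε : 0 ≤ ε)
    (hK0 : ∀ t tr, 0 ≤ K t tr) (hK1 : ∀ t, ∑ tr, K t tr = 1)
    (hDP : ∀ t t', NeighborStr t t' → ∀ tr, K t tr ≤ exp ε * K t' tr) :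
    infoCost (fun _ : Fin (2 * n) → Bool =>
      (1 : ℝ) / Fintype.card (Fin (2 * n) → Bool)) K ≤ n * ε ^ 2 := by
  have hcard : ((Fintype.card (Fin (2 * n) → Bool) : ℝ)) = 2 ^ (2 * n) := by
    rw [Fintype.card_fun]
    simp
  have hfun : (fun _ : Fin (2 * n) → Bool => (1 : ℝ) / Fintype.card (Fin (2 * n) → Bool))
      = (fun _ : Fin (2 * n) → Bool => (1 : ℝ) / 2 ^ (2 * n)) := by
    funext t
    rw [hcard]
  rw [hfun]
  have h := aux_bound ε hε (2 * n) K hK0 hK1 hDP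
  calc infoCost (fun _ : Fin (2 * n) → Bool => (1 : ℝ) / 2 ^ (2 * n)) K
      ≤ (2 * n : ℕ) * (ε ^ 2 / 2) := h
    _ = n * ε ^ 2 := by push_cast; ring
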